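/- Fix θ ∈ (-π/2, π/2) and t ≥ 0. For every bounded continuous φ : ℂ → ℂ and every x ∈ ℂ, P_t^θ (P_t^{-θ} φ)(x) = P_t^{-θ} (P_t^θ φ)(x) = ∫_ℂ φ(e^{-2t cosθ} x + √(1-e^{-4t cosθ}) z) dγ(z); in particular P_t^θ commutes with its L²(γ)-adjoint P_t^{-θ} on bounded continuous functions (normality of the complex Ornstein–Uhlenbeck semigroup). -/

import Mathlib

open MeasureTheory Complex Filter Finset
open scoped Real ComplexConjugate
open scoped ENNReal NNReal
open ProbabilityTheory

noncomputable def gamma : MeasureTheory.Measure ℂ :=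
  MeasureTheory.volume.withDensity fun z =>
    ENNReal.ofReal ((2 * Real.pi)⁻¹ * Real.exp (-(z.re ^ 2 + z.im ^ 2) / 2))
/-- The complex Ornstein–Uhlenbeck semigroup (Mehler formula form). -/
noncomputable def P (θ t : ℝ) (φ : ℂ → ℂ) (x : ℂ) : ℂ :=
  ∫ y, φ (Complex.exp (-((Real.cos θ : ℂ) + (Real.sin θ : ℂ) * Complex.I) * t) * x
      + (Real.sqrt (1 - Real.exp (-2 * t * Real.cos θ)) : ℂ) * y) ∂gamma

noncomputable def G : Measure ℝ := gaussianReal 0 1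

instance : IsProbabilityMeasure G := by unfold G; infer_instance

lemma G_def : G = volume.withDensity (gaussianPDF 0 1) := gaussianReal_of_var_ne_zero 0 one_ne_zero

lemma map_withDensity' {α β : Type*} [MeasurableSpace α] [MeasurableSpace β]
    {f : α → β} (hf : Measurable f) (μ : Measure α) {g : β → ℝ≥0∞} (hg : Measurable g) :
    Measure.map f (μ.withDensity (fun a => g (f a))) = (Measure.map f μ).withDensity g := by
  ext s hs
  rw [Measure.map_apply hf hs, withDensity_apply _ hs, withDensity_apply _ (hf hs),
    setLIntegral_map hs hg hf]

lemma prod_G :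
    G.prod G = (volume.prod volume).withDensity
      (fun p : ℝ × ℝ => gaussianPDF 0 1 p.1 * gaussianPDF 0 1 p.2) := by
  have hG : ∀ s : Set ℝ, MeasurableSet s → G s = ∫⁻ x in s, gaussianPDF 0 1 x := by
    intro s hs
    rw [G_def, withDensity_apply _ hs]
  refine Measure.prod_eq fun s t hs ht => ?_
  rw [withDensity_apply _ (hs.prod ht), ← Measure.prod_restrict,
    lintegral_prod_mul (measurable_gaussianPDF 0 1).aemeasurable
      (measurable_gaussianPDF 0 1).aemeasurable, hG s hs, hG t ht]

noncomputable def D : ℂ → ℝ≥0∞ := fun z =>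
  ENNReal.ofReal ((2 * Real.pi)⁻¹ * Real.exp (-(z.re ^ 2 + z.im ^ 2) / 2))

lemma measurable_D : Measurable D := by
  apply Measurable.ennreal_ofReal
  fun_prop

lemma density_eq (p : ℝ × ℝ) :
    gaussianPDF 0 1 p.1 * gaussianPDF 0 1 p.2 = D (Complex.measurableEquivRealProd.symm p) := by
  rw [Complex.measurableEquivRealProd_symm_apply]
  simp only [gaussianPDF, gaussianPDFReal, D, NNReal.coe_one, mul_one]
  rw [← ENNReal.ofReal_mul (by positivity)]
  congr 1
  calc (√(2*π))⁻¹ * rexp (-(p.1 - 0)^2/(2:ℝ)) * ((√(2*π))⁻¹ * rexp (-(p.2-0)^2/2))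
      = ((√(2*π))⁻¹ * (√(2*π))⁻¹) * (rexp (-(p.1-0)^2/2) * rexp (-(p.2-0)^2/2)) := by ring
    _ = (2*π)⁻¹ * rexp (-(p.1^2+p.2^2)/2) := by
        rw [← mul_inv, Real.mul_self_sqrt (by positivity), ← Real.exp_add]
        congr 1
        ring

lemma gamma_eq : gamma = Measure.map Complex.measurableEquivRealProd.symm (G.prod G) := by
  rw [prod_G]
  have h1 : (fun p : ℝ × ℝ => gaussianPDF 0 1 p.1 * gaussianPDF 0 1 p.2)
      = fun p => D (Complex.measurableEquivRealProd.symm p) := funext density_eq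
  rw [h1, map_withDensity' Complex.measurableEquivRealProd.symm.measurable _ measurable_D]
  have h2 : Measure.map Complex.measurableEquivRealProd.symm (volume.prod volume)
      = (volume : Measure ℂ) := by
    rw [← Measure.volume_eq_prod]
    exact (Complex.volume_preserving_equiv_real_prod.symm Complex.measurableEquivRealProd).map_eq
  rw [h2]; rfl

instance : IsProbabilityMeasure gamma := by
  rw [gamma_eq]
  exact Measure.isProbabilityMeasure_map Complex.measurableEquivRealProd.symm.measurable.aemeasurable

lemma gamma_rot {e : ℂ} (he : ‖e‖ = 1) :
    Measure.map (fun z => e * z) gamma = gamma := by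
  have he0 : e ≠ 0 := by intro h; simp [h] at he
  have hvol : Measure.map (fun z => e * z) (volume : Measure ℂ) = volume := by
    have := (rotation ⟨e, by simpa [Submonoid.unitSphere, mem_sphere_zero_iff_norm] using he⟩
      ).measurePreserving.map_eq
    convert this using 2
    · rfl
    · funext z
      rfl
  have hD : ∀ z : ℂ, D (e * z) = D z := by
    intro z
    unfold D
    congr 2
    have : (e * z).re ^ 2 + (e * z).im ^ 2 = Complex.normSq (e * z) := by
      simp [Complex.normSq_apply]; ring
    have h2 : z.re ^ 2 + z.im ^ 2 = Complex.normSq z := by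
      simp [Complex.normSq_apply]; ring
    rw [this, h2, Complex.normSq_mul]
    have : Complex.normSq e = 1 := by
      have := Complex.sq_norm e
      rw [he] at this
      simpa using this.symm
    rw [this, one_mul]
  have hgd : gamma = volume.withDensity (fun z => D (e * z)) := by
    unfold gamma
    congr 1
    funext z
    exact (hD z).symm
  conv_lhs => rw [hgd]
  rw [map_withDensity' (by fun_prop) _ measurable_D, hvol]
  rfl

lemma mp_assoc {α' β' γ' : Type*} [MeasurableSpace α'] [MeasurableSpace β'] [MeasurableSpace γ']
    (μ' : Measure α') (ν' : Measure β') (κ' : Measure γ') [SFinite μ'] [SFinite ν'] [SFinite κ'] :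
    MeasurePreserving (MeasurableEquiv.prodAssoc : (α' × β') × γ' ≃ᵐ _)
      ((μ'.prod ν').prod κ') (μ'.prod (ν'.prod κ')) :=
  ⟨MeasurableEquiv.prodAssoc.measurable, Measure.prodAssoc_prod⟩

lemma mp_K {α β γ δ : Type*} [MeasurableSpace α] [MeasurableSpace β] [MeasurableSpace γ]
    [MeasurableSpace δ] (μ : Measure α) (ν : Measure β) (κ : Measure γ) (τ : Measure δ)
    [SigmaFinite μ] [SigmaFinite ν] [SigmaFinite κ] [SigmaFinite τ] :
    MeasurePreserving (fun p : (α × β) × (γ × δ) => ((p.1.1, p.2.1), (p.1.2, p.2.2)))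
      ((μ.prod ν).prod (κ.prod τ)) ((μ.prod κ).prod (ν.prod τ)) := by
  have h1 := mp_assoc μ ν (κ.prod τ)
  have h2 := (mp_assoc ν κ τ).symm MeasurableEquiv.prodAssoc
  have h3 := (Measure.measurePreserving_swap (μ := ν) (ν := κ)).prod
    (MeasurePreserving.id τ)
  have h4 := mp_assoc κ ν τ
  have h5 := (MeasurePreserving.id μ).prod ((h4.comp h3).comp h2)
  have h6 := (mp_assoc μ κ (ν.prod τ)).symm MeasurableEquiv.prodAssoc
  have := (h6.comp h5).comp h1
  exact this

noncomputable def Jf : ℂ × ℂ → ℂ × ℂ := fun p =>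
  (Complex.measurableEquivRealProd.symm (p.1.re, p.2.re),
   Complex.measurableEquivRealProd.symm (p.1.im, p.2.im))

lemma mp_e2symm : MeasurePreserving (⇑Complex.measurableEquivRealProd.symm) (G.prod G) gamma :=
  ⟨Complex.measurableEquivRealProd.symm.measurable, gamma_eq.symm⟩

lemma mp_e2 : MeasurePreserving (⇑Complex.measurableEquivRealProd) gamma (G.prod G) := by
  have := mp_e2symm.symm Complex.measurableEquivRealProd.symm
  simpa using this

lemma mp_J : MeasurePreserving Jf (gamma.prod gamma) (gamma.prod gamma) := by
  have h := ((mp_e2symm.prod mp_e2symm).comp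
    ((mp_K G G G G).comp (mp_e2.prod mp_e2)))
  exact h

lemma mp_mul {e : ℂ} (he : ‖e‖ = 1) :
    MeasurePreserving (fun z => e * z) gamma gamma :=
  ⟨by fun_prop, gamma_rot he⟩

lemma mp_R {c s : ℝ} (h : c ^ 2 + s ^ 2 = 1) :
    MeasurePreserving (fun p : ℂ × ℂ => ((c:ℂ) * p.1 - (s:ℂ) * p.2, (s:ℂ) * p.1 + (c:ℂ) * p.2))
      (gamma.prod gamma) (gamma.prod gamma) := by
  set e : ℂ := (c:ℂ) + (s:ℂ) * Complex.I with hedef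
  have he : ‖e‖ = 1 := by
    have h2 : ‖e‖ ^ 2 = 1 := by
      rw [Complex.sq_norm]
      simp only [Complex.normSq_apply, hedef]
      simp only [Complex.add_re, Complex.ofReal_re, Complex.mul_re, Complex.ofReal_im,
        Complex.I_re, Complex.I_im, Complex.add_im, Complex.mul_im]
      nlinarith [h]
    nlinarith [norm_nonneg e]
  have hmp := (mp_J.comp ((mp_mul he).prod (mp_mul he))).comp mp_J
  have hfeq : (Jf ∘ Prod.map (fun z => e * z) (fun z => e * z)) ∘ Jf
      = fun p : ℂ × ℂ => ((c:ℂ) * p.1 - (s:ℂ) * p.2, (s:ℂ) * p.1 + (c:ℂ) * p.2) := by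
    funext p
    simp only [Function.comp_apply, Jf, Prod.map, Complex.measurableEquivRealProd_symm_apply]
    refine Prod.ext (Complex.ext ?_ ?_) (Complex.ext ?_ ?_) <;>
      simp [Complex.mul_re, Complex.mul_im, hedef] <;> ring
  rw [hfeq] at hmp
  exact hmp

lemma integrable_of_bdd {F : ℂ × ℂ → ℂ} (hc : Continuous F) {C : ℝ} (hb : ∀ p, ‖F p‖ ≤ C) :
    Integrable F (gamma.prod gamma) :=
  ⟨hc.aestronglyMeasurable, HasFiniteIntegral.of_bounded (ae_of_all _ hb)⟩

lemma key {f : ℂ → ℂ} (hf : Continuous f) {C : ℝ} (hb : ∀ z, ‖f z‖ ≤ C) (u v : ℂ) :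
    ∫ y, ∫ z, f (u * y + v * z) ∂gamma ∂gamma
      = ∫ w, f ((Real.sqrt (‖u‖ ^ 2 + ‖v‖ ^ 2) : ℂ) * w) ∂gamma := by
  have hcont : Continuous fun p : ℂ × ℂ => f (u * p.1 + v * p.2) := by fun_prop
  have hInt : Integrable (fun p : ℂ × ℂ => f (u * p.1 + v * p.2)) (gamma.prod gamma) :=
    integrable_of_bdd hcont (fun p => hb _)
  have step0 : ∫ y, ∫ z, f (u * y + v * z) ∂gamma ∂gamma
      = ∫ p : ℂ × ℂ, f (u * p.1 + v * p.2) ∂(gamma.prod gamma) :=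
    integral_integral hInt
  rw [step0]
  by_cases h0 : u = 0 ∧ v = 0
  · obtain ⟨hu, hv⟩ := h0
    simp [hu, hv, integral_const, measure_univ]
  -- nondegenerate case
  have hab : (0:ℝ) < ‖u‖ ^ 2 + ‖v‖ ^ 2 := by
    rcases not_and_or.mp h0 with h | h
    · have : 0 < ‖u‖ := norm_pos_iff.mpr h
      positivity
    · have : 0 < ‖v‖ := norm_pos_iff.mpr h
      positivity
  obtain ⟨eu, heu, huu⟩ : ∃ e : ℂ, ‖e‖ = 1 ∧ ((‖u‖ : ℝ) : ℂ) * e = u := by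
    by_cases hu : u = 0
    · exact ⟨1, norm_one, by simp [hu]⟩
    · have hnu : (0:ℝ) < ‖u‖ := norm_pos_iff.mpr hu
      refine ⟨u / ‖u‖, ?_, ?_⟩
      · rw [norm_div]
        simp only [Complex.norm_real, Real.norm_eq_abs, abs_of_pos hnu]
        exact div_self (ne_of_gt hnu)
      · have hne : (‖u‖ : ℂ) ≠ 0 := by
          simpa using ne_of_gt hnu
        rw [mul_comm, div_mul_cancel₀ u hne]
  obtain ⟨ev, hev, hvv⟩ : ∃ e : ℂ, ‖e‖ = 1 ∧ ((‖v‖ : ℝ) : ℂ) * e = v := by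
    by_cases hv : v = 0
    · exact ⟨1, norm_one, by simp [hv]⟩
    · have hnv : (0:ℝ) < ‖v‖ := norm_pos_iff.mpr hv
      refine ⟨v / ‖v‖, ?_, ?_⟩
      · rw [norm_div]
        simp only [Complex.norm_real, Real.norm_eq_abs, abs_of_pos hnv]
        exact div_self (ne_of_gt hnv)
      · have hne : (‖v‖ : ℂ) ≠ 0 := by
          simpa using ne_of_gt hnv
        rw [mul_comm, div_mul_cancel₀ v hne]
  set a : ℝ := ‖u‖ with ha
  set b : ℝ := ‖v‖ with hb'
  -- step 1 : reduce to real coefficients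
  have hmapuv : Measure.map (Prod.map (fun z => eu * z) (fun z => ev * z)) (gamma.prod gamma)
      = gamma.prod gamma := ((mp_mul heu).prod (mp_mul hev)).map_eq
  have hcont2 : Continuous fun p : ℂ × ℂ => f ((a:ℂ) * p.1 + (b:ℂ) * p.2) := by fun_prop
  have step1 : ∫ p : ℂ × ℂ, f (u * p.1 + v * p.2) ∂(gamma.prod gamma)
      = ∫ p : ℂ × ℂ, f ((a:ℂ) * p.1 + (b:ℂ) * p.2) ∂(gamma.prod gamma) := by
    conv_rhs => rw [← hmapuv]
    rw [integral_map (by fun_prop) hcont2.aestronglyMeasurable]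
    congr 1
    funext p
    simp only [Prod.map]
    rw [← mul_assoc, ← mul_assoc, huu, hvv]
  rw [step1]
  -- step 2 : rotation
  set r : ℝ := Real.sqrt (a ^ 2 + b ^ 2) with hr
  have hrpos : 0 < r := Real.sqrt_pos.mpr hab
  have hc2 : (a / r) ^ 2 + (-(b / r)) ^ 2 = 1 := by
    have : r ^ 2 = a ^ 2 + b ^ 2 := Real.sq_sqrt hab.le
    field_simp
    linarith [this]
  have hmapR := (mp_R hc2).map_eq
  have hcont3 : Continuous fun p : ℂ × ℂ => f ((r:ℂ) * p.1) := by fun_prop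
  have step2 : ∫ p : ℂ × ℂ, f ((a:ℂ) * p.1 + (b:ℂ) * p.2) ∂(gamma.prod gamma)
      = ∫ p : ℂ × ℂ, f ((r:ℂ) * p.1) ∂(gamma.prod gamma) := by
    conv_rhs => rw [← hmapR]
    rw [integral_map (by fun_prop) hcont3.aestronglyMeasurable]
    congr 1
    funext p
    congr 1
    have hrne : (r:ℂ) ≠ 0 := by
      simpa using ne_of_gt hrpos
    have h1 : (r:ℂ) * ((a/r : ℝ):ℂ) = (a:ℂ) := by
      push_cast
      field_simp
    have h2 : (r:ℂ) * ((-(b/r) : ℝ):ℂ) = -(b:ℂ) := by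
      push_cast
      field_simp
    symm
    calc (r:ℂ) * (((a/r : ℝ):ℂ) * p.1 - ((-(b/r) : ℝ):ℂ) * p.2)
        = ((r:ℂ) * ((a/r : ℝ):ℂ)) * p.1 - ((r:ℂ) * ((-(b/r) : ℝ):ℂ)) * p.2 := by ring
      _ = (a:ℂ) * p.1 + (b:ℂ) * p.2 := by rw [h1, h2]; ring
  rw [step2]
  -- step 3 : marginal
  have hmfst : Measure.map Prod.fst (gamma.prod gamma) = gamma := by
    rw [Measure.map_fst_prod]
    simp
  calc ∫ p : ℂ × ℂ, f ((r:ℂ) * p.1) ∂(gamma.prod gamma)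
      = ∫ y, f ((r:ℂ) * y) ∂(Measure.map Prod.fst (gamma.prod gamma)) :=
        (integral_map measurable_fst.aemeasurable
          ((show Continuous fun y : ℂ => f ((r:ℂ) * y) by fun_prop).aestronglyMeasurable)).symm
    _ = ∫ w, f ((r:ℂ) * w) ∂gamma := by rw [hmfst]

lemma comp_formula (θ : ℝ) (hc : 0 < Real.cos θ) (t : ℝ) (ht : 0 ≤ t) (φ : ℂ → ℂ)
    (hφc : Continuous φ) (C : ℝ) (hC : ∀ z : ℂ, ‖φ z‖ ≤ C) (x : ℂ) :
    P θ t (P (-θ) t φ) x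
      = ∫ z, φ ((Real.exp (-2 * t * Real.cos θ) : ℂ) * x
          + (Real.sqrt (1 - Real.exp (-4 * t * Real.cos θ)) : ℂ) * z) ∂gamma := by
  simp only [P, Real.cos_neg, Real.sin_neg, Complex.ofReal_neg]
  set A : ℂ := Complex.exp (-((Real.cos θ : ℂ) + (Real.sin θ : ℂ) * Complex.I) * t) with hA
  set A' : ℂ := Complex.exp (-((Real.cos θ : ℂ) + -(Real.sin θ : ℂ) * Complex.I) * t) with hA'
  set S : ℝ := Real.sqrt (1 - Real.exp (-2 * t * Real.cos θ)) with hS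
  have hAA' : A' * A = ((Real.exp (-2 * t * Real.cos θ) : ℝ) : ℂ) := by
    rw [hA, hA', ← Complex.exp_add, Complex.ofReal_exp]
    congr 1
    push_cast
    ring
  have hexple : Real.exp (-2 * t * Real.cos θ) ≤ 1 := by
    rw [Real.exp_le_one_iff]
    nlinarith
  have hS0 : (0:ℝ) ≤ 1 - Real.exp (-2 * t * Real.cos θ) := by linarith
  have hSsq : S ^ 2 = 1 - Real.exp (-2 * t * Real.cos θ) := Real.sq_sqrt hS0
  have hSnn : (0:ℝ) ≤ S := Real.sqrt_nonneg _
  have hnormA' : ‖A'‖ = Real.exp (-(t * Real.cos θ)) := by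
    rw [hA', Complex.norm_exp]
    congr 1
    simp only [Complex.mul_re, Complex.neg_re, Complex.add_re, Complex.ofReal_re,
      Complex.neg_im, Complex.add_im, Complex.ofReal_im, Complex.mul_im,
      Complex.I_re, Complex.I_im]
    ring
  have hnorm : ‖A' * (S:ℂ)‖ ^ 2 + ‖(S:ℂ)‖ ^ 2 = 1 - Real.exp (-4 * t * Real.cos θ) := by
    have e1 : Real.exp (-(t * Real.cos θ)) ^ 2 = Real.exp (-2 * t * Real.cos θ) := by
      rw [sq, ← Real.exp_add]; congr 1; ring
    have e2 : Real.exp (-2 * t * Real.cos θ) * Real.exp (-2 * t * Real.cos θ)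
        = Real.exp (-4 * t * Real.cos θ) := by
      rw [← Real.exp_add]; congr 1; ring
    have hnS : ‖(S:ℂ)‖ = S := by
      rw [Complex.norm_real, Real.norm_eq_abs, _root_.abs_of_nonneg hSnn]
    rw [norm_mul, hnormA', hnS, mul_pow, e1, hSsq]
    nlinarith [e2]
  have hfc : Continuous fun w : ℂ => φ ((Real.exp (-2 * t * Real.cos θ) : ℂ) * x + w) :=
    hφc.comp (continuous_const.add continuous_id)
  have hfb : ∀ w : ℂ, ‖φ ((Real.exp (-2 * t * Real.cos θ) : ℂ) * x + w)‖ ≤ C := fun w => hC _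
  have h0 : (∫ y, ∫ z, φ (A' * (A * x + (S:ℂ) * y) + (S:ℂ) * z) ∂gamma ∂gamma)
      = ∫ y, ∫ z, (fun w : ℂ => φ ((Real.exp (-2 * t * Real.cos θ) : ℂ) * x + w))
          ((A' * (S:ℂ)) * y + (S:ℂ) * z) ∂gamma ∂gamma := by
    congr 1
    funext y
    congr 1
    funext z
    simp only
    congr 1
    rw [← hAA']
    ring
  rw [h0, key hfc hfb (A' * (S:ℂ)) ((S:ℂ))]
  simp only [hnorm]


/-- Normality of the complex Ornstein–Uhlenbeck semigroup: `P_t^θ` commutes with its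
`L²(γ)`-adjoint `P_t^{-θ}` on bounded continuous functions, and both compositions
are given by an explicit Mehler-type formula. -/
theorem Pt_normal (θ : ℝ) (hθ : θ ∈ Set.Ioo (-(Real.pi / 2)) (Real.pi / 2))
    (t : ℝ) (ht : 0 ≤ t) (φ : ℂ → ℂ)
    (hφc : Continuous φ) (hφb : ∃ C : ℝ, ∀ z : ℂ, ‖φ z‖ ≤ C) (x : ℂ) :
    P θ t (P (-θ) t φ) x = P (-θ) t (P θ t φ) x
    ∧ P θ t (P (-θ) t φ) x
        = ∫ z, φ ((Real.exp (-2 * t * Real.cos θ) : ℂ) * x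
            + (Real.sqrt (1 - Real.exp (-4 * t * Real.cos θ)) : ℂ) * z) ∂gamma := by
  obtain ⟨C, hC⟩ := hφb
  have hc : 0 < Real.cos θ := Real.cos_pos_of_mem_Ioo hθ
  have h1 := comp_formula θ hc t ht φ hφc C hC x
  have h2 := comp_formula (-θ) (by rwa [Real.cos_neg]) t ht φ hφc C hC x
  rw [neg_neg, Real.cos_neg] at h2
  exact ⟨h1.trans h2.symm, h1⟩
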